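/- arXiv:1907.12501 — 3 statements merged into one kernel-verified Lean document; each statement's English description precedes it below -/
import Mathlib

section
/- Let P be an extended logic program over Σ and q ∈ Σ. Then for every extended logic program R with Σ(R) ⊆ Σ∖{q}, AS(P ∪ R)‖{q} ⊆ AS(f_SP(P,q) ∪ R), i.e. every answer set of P ∪ R, with q removed, is an answer set of f_SP(P,q) ∪ R. -/
/- Core development: extended logic programs, HT-semantics, normal form,
   the syntactic forgetting operator f_SP, the semantic operator f_Sem,
   criterion Ω, q-forgettability, and distances between programs. -/

namespace ASPForget

variable {α : Type*} [DecidableEq α]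

/-- Body literals: an atom `a`, `not a`, or `not not a`. -/
inductive Lit (α : Type*) where
  | pos (a : α)
  | neg (a : α)
  | nneg (a : α)
  deriving DecidableEq

namespace Lit

/-- The atom of a body literal. -/
def atom : Lit α → α
  | pos a => a
  | neg a => a
  | nneg a => a

def isPos : Lit α → Bool
  | pos _ => true
  | _ => false

def isNeg : Lit α → Bool
  | neg _ => true
  | _ => false

def isNneg : Lit α → Bool
  | nneg _ => true
  | _ => false

/-- `not l`, with the simplification `not not not a = not a`. -/
def negate : Lit α → Lit α
  | pos a => neg a
  | neg a => nneg a
  | nneg a => neg a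

/-- `not not l`, with the simplifications. -/
def dneg : Lit α → Lit α
  | pos a => nneg a
  | neg a => neg a
  | nneg a => nneg a

end Lit

/-- A rule `H(r) ← B(r)` with a finite head (set of atoms) and
    a finite body (set of body literals). -/
structure Rule (α : Type*) where
  head : Finset α
  body : Finset (Lit α)
  deriving DecidableEq

namespace Rule

/-- `B⁺(r)`: the positive body atoms. -/
def bp (r : Rule α) : Finset α := (r.body.filter (fun l => l.isPos = true)).image Lit.atom

/-- `B⁻(r)`: the atoms under single negation in the body. -/
def bn (r : Rule α) : Finset α := (r.body.filter (fun l => l.isNeg = true)).image Lit.atom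

/-- `B⁻⁻(r)`: the atoms under double negation in the body. -/
def bnn (r : Rule α) : Finset α := (r.body.filter (fun l => l.isNneg = true)).image Lit.atom

end Rule

/-- Atoms occurring in a rule: `Σ(r)`. -/
def sigmaR (r : Rule α) : Finset α := r.head ∪ r.body.image Lit.atom

/-- Atoms occurring in a program: `Σ(P)`. -/
def sigmaSet (P : Set (Rule α)) : Set α := ⋃ r ∈ P, (sigmaR r : Set α)

/-- Satisfaction of a body literal by an interpretation. -/
def satLit (I : Finset α) : Lit α → Prop
  | .pos a => a ∈ I
  | .neg a => a ∉ I
  | .nneg a => a ∈ I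

/-- Classical satisfaction of a rule: if the body is satisfied then some head atom is true. -/
def ruleSat (I : Finset α) (r : Rule α) : Prop :=
  (∀ l ∈ r.body, satLit I l) → (r.head ∩ I).Nonempty

/-- Classical satisfaction of a program. -/
def clSat (I : Finset α) (P : Set (Rule α)) : Prop := ∀ r ∈ P, ruleSat I r

/-- The rule `H(r) ← B⁺(r)` (only the positive part of the body is kept). -/
def posPart (r : Rule α) : Rule α := ⟨r.head, r.body.filter (fun l => l.isPos = true)⟩

/-- The reduct `P^I`. -/
def reduct (P : Set (Rule α)) (I : Finset α) : Set (Rule α) :=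
  {s | ∃ r ∈ P, r.bn ∩ I = ∅ ∧ r.bnn ⊆ I ∧ s = posPart r}

/-- `⟨X,Y⟩ ⊨ P`: HT-satisfaction, i.e. `Y ⊨ P` and `X ⊨ P^Y`. -/
def htSat (P : Set (Rule α)) (X Y : Finset α) : Prop :=
  clSat Y P ∧ clSat X (reduct P Y)

/-- `HT(P)`: the HT-models of `P`, restricted to `Σ(P)`. -/
def HTset (P : Set (Rule α)) : Set (Finset α × Finset α) :=
  {p | p.1 ⊆ p.2 ∧ (↑p.2 : Set α) ⊆ sigmaSet P ∧ htSat P p.1 p.2}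

/-- `AS(P)`: the answer sets of `P`. -/
def AS (P : Set (Rule α)) : Set (Finset α) :=
  {Y | (Y, Y) ∈ HTset P ∧ ∀ X : Finset α, X ⊂ Y → (X, Y) ∉ HTset P}

/-- A tautological rule. -/
def Tautological (r : Rule α) : Prop :=
  (r.head ∩ r.bp).Nonempty ∨ (r.bp ∩ r.bn).Nonempty ∨ (r.bn ∩ r.bnn).Nonempty

/-- `r` is minimal in `P`. -/
def MinimalIn (P : Set (Rule α)) (r : Rule α) : Prop :=
  ¬ ∃ r' ∈ P, (r'.head ⊆ r.head ∧ r'.body ⊂ r.body) ∨ (r'.head ⊂ r.head ∧ r'.body ⊆ r.body)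

/-- `P` is in normal form. -/
def InNormalForm (P : Set (Rule α)) : Prop :=
  (∀ r ∈ P, ∀ a : α,
      ¬(Lit.pos a ∈ r.body ∧ Lit.neg a ∈ r.body) ∧
      ¬(Lit.pos a ∈ r.body ∧ Lit.nneg a ∈ r.body) ∧
      ¬(Lit.neg a ∈ r.body ∧ Lit.nneg a ∈ r.body)) ∧
  (∀ r ∈ P, ∀ a ∈ r.head, Lit.pos a ∉ r.body ∧ Lit.neg a ∉ r.body) ∧
  (∀ r ∈ P, MinimalIn P r)

/-- Steps (2) and (3) of the normal form construction applied to a single rule: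
    remove `a` from `B⁻⁻(r)` whenever `a ∈ B⁺(r)`, and remove `a` from `H(r)`
    whenever `a ∈ B⁻(r)`. -/
def nfRule (r : Rule α) : Rule α :=
  ⟨r.head \ r.bn, r.body.filter (fun l => ¬(l.isNneg = true ∧ l.atom ∈ r.bp))⟩

/-- `NF(P)`: remove tautological rules, simplify each remaining rule,
    and keep only the minimal rules of the result. -/
def NF (P : Set (Rule α)) : Set (Rule α) :=
  {r ∈ nfRule '' {r ∈ P | ¬ Tautological r} |
    MinimalIn (nfRule '' {r ∈ P | ¬ Tautological r}) r}

/-! The partition of a program according to the occurrences of an atom `q`. -/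

/-- `R`: rules not mentioning `q`. -/
def pR (Q : Set (Rule α)) (q : α) : Set (Rule α) := {r ∈ Q | q ∉ sigmaR r}
/-- `R0`: rules with `q` in the body. -/
def p0 (Q : Set (Rule α)) (q : α) : Set (Rule α) := {r ∈ Q | Lit.pos q ∈ r.body}
/-- `R1`: rules with `not q` in the body. -/
def p1 (Q : Set (Rule α)) (q : α) : Set (Rule α) := {r ∈ Q | Lit.neg q ∈ r.body}
/-- `R2`: rules with `not not q` in the body and `q` not in the head. -/
def p2 (Q : Set (Rule α)) (q : α) : Set (Rule α) :=
  {r ∈ Q | Lit.nneg q ∈ r.body ∧ q ∉ r.head}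
/-- `R3`: rules with `not not q` in the body and `q` in the head (self-cycles). -/
def p3 (Q : Set (Rule α)) (q : α) : Set (Rule α) :=
  {r ∈ Q | Lit.nneg q ∈ r.body ∧ q ∈ r.head}
/-- `R4`: rules with `q` in the head and no `not not q` in the body. -/
def p4 (Q : Set (Rule α)) (q : α) : Set (Rule α) :=
  {r ∈ Q | Lit.nneg q ∉ r.body ∧ q ∈ r.head}

/-- `H^q(r) = H(r)∖{q}`. -/
def Hq (q : α) (r : Rule α) : Finset α := r.head.erase q
/-- `B^q(r) = B(r)∖{q, not q, not not q}`. -/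
def Bq (q : α) (r : Rule α) : Finset (Lit α) := r.body.filter (fun l => l.atom ≠ q)

/-- `not(S)` for a set of body literals, with simplification. -/
def notL (S : Finset (Lit α)) : Finset (Lit α) := S.image Lit.negate
/-- `not not(S)` for a set of body literals, with simplification. -/
def dnegL (S : Finset (Lit α)) : Finset (Lit α) := S.image Lit.dneg
/-- `not(A)` for a set of atoms. -/
def notA (A : Finset α) : Finset (Lit α) := A.image Lit.neg
/-- `not not(A)` for a set of atoms. -/
def dnegA (A : Finset α) : Finset (Lit α) := A.image Lit.nneg

/-- The as-dual `Dual(q,Q)`: all sets obtained from a partition `⟨F,T⟩` of `Q` by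
    picking one literal of `B^q(r)` for each `r ∈ F` (negated) and one atom of
    `H^q(r)` for each `r ∈ T` (doubly negated). -/
def Dual (q : α) (Q : Set (Rule α)) : Set (Finset (Lit α)) :=
  { D | ∃ (F T : Set (Rule α)) (bf : Rule α → Lit α) (hf : Rule α → α),
      F ∪ T = Q ∧ Disjoint F T ∧
      (∀ r ∈ F, bf r ∈ Bq q r) ∧ (∀ r ∈ T, hf r ∈ Hq q r) ∧
      (↑D : Set (Lit α)) =
        (fun r => (bf r).negate) '' F ∪ (fun r => Lit.nneg (hf r)) '' T }

/-! The rules generated by the derivation rules (1a)–(7). -/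

def rule1a (q : α) (r0 r4 : Rule α) : Rule α :=
  ⟨r0.head ∪ Hq q r4, Bq q r0 ∪ r4.body⟩

def rule2a (q : α) (r0 r3 r' : Rule α) : Rule α :=
  ⟨r0.head ∪ Hq q r3, Bq q r0 ∪ Bq q r3 ∪ notA (Hq q r') ∪ dnegL (Bq q r')⟩

def rule3a (q : α) (r0 r3 : Rule α) (h : α) (D : Finset (Lit α)) : Rule α :=
  ⟨r0.head, Bq q r0 ∪ {Lit.nneg h} ∪ D ∪ Bq q r3 ∪ notA (Hq q r3)⟩

def rule1b (q : α) (r2 r4 : Rule α) : Rule α :=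
  ⟨r2.head, Bq q r2 ∪ notA (Hq q r4) ∪ dnegL r4.body⟩

def rule2b (q : α) (r2 r3 r' : Rule α) : Rule α :=
  ⟨r2.head, Bq q r2 ∪ notA (Hq q r3 ∪ Hq q r') ∪ dnegL (Bq q r3 ∪ Bq q r')⟩

def rule3b (q : α) (r2 r3 : Rule α) (h : α) (D : Finset (Lit α)) : Rule α :=
  ⟨r2.head, Bq q r2 ∪ notA (Hq q r3) ∪ dnegL (Bq q r3) ∪ {Lit.nneg h} ∪ D⟩

def rule4 (q : α) (r' : Rule α) (D : Finset (Lit α)) : Rule α :=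
  ⟨Hq q r', Bq q r' ∪ D⟩

def rule5 (q : α) (r' r3 r : Rule α) (D : Finset (Lit α)) : Rule α :=
  ⟨Hq q r', Bq q r' ∪ notA (r.head ∪ Hq q r3) ∪ dnegL (Bq q r ∪ Bq q r3) ∪ D⟩

def rule6 (q : α) (r' r3 : Rule α) (h : α) (D : Finset (Lit α)) : Rule α :=
  ⟨Hq q r', Bq q r' ∪ notA (Hq q r3) ∪ dnegL (Bq q r3) ∪ {Lit.nneg h} ∪ D⟩

def rule7 (q : α) (r0 r3 r3' : Rule α) (h : α) (D : Finset (Lit α)) : Rule α :=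
  ⟨r0.head ∪ Hq q r3,
    Bq q r0 ∪ Bq q r3 ∪ notA (Hq q r3') ∪ dnegL (Bq q r3') ∪ {Lit.nneg h} ∪ D⟩

/-! The sets of rules generated by each derivation rule, from `P' = NF(P)`. -/

def gen1a (P : Set (Rule α)) (q : α) : Set (Rule α) :=
  {s | ∃ r0 ∈ p0 (NF P) q, ∃ r4 ∈ p4 (NF P) q, s = rule1a q r0 r4}

def gen2a (P : Set (Rule α)) (q : α) : Set (Rule α) :=
  {s | ∃ r0 ∈ p0 (NF P) q, ∃ r3 ∈ p3 (NF P) q, ∃ r' ∈ p1 (NF P) q ∪ p4 (NF P) q,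
    s = rule2a q r0 r3 r'}

def gen3a (P : Set (Rule α)) (q : α) : Set (Rule α) :=
  {s | ∃ r0 ∈ p0 (NF P) q, ∃ r3 ∈ p3 (NF P) q, ∃ h ∈ r0.head,
    ∃ D ∈ Dual q ((p0 (NF P) q ∪ p2 (NF P) q) \ {r0}), s = rule3a q r0 r3 h D}

def gen1b (P : Set (Rule α)) (q : α) : Set (Rule α) :=
  {s | ∃ r2 ∈ p2 (NF P) q, ∃ r4 ∈ p4 (NF P) q, s = rule1b q r2 r4}

def gen2b (P : Set (Rule α)) (q : α) : Set (Rule α) :=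
  {s | ∃ r2 ∈ p2 (NF P) q, ∃ r3 ∈ p3 (NF P) q, ∃ r' ∈ p1 (NF P) q ∪ p4 (NF P) q,
    s = rule2b q r2 r3 r'}

def gen3b (P : Set (Rule α)) (q : α) : Set (Rule α) :=
  {s | ∃ r2 ∈ p2 (NF P) q, ∃ r3 ∈ p3 (NF P) q, ∃ h ∈ r2.head,
    ∃ D ∈ Dual q ((p0 (NF P) q ∪ p2 (NF P) q) \ {r2}), s = rule3b q r2 r3 h D}

def gen4 (P : Set (Rule α)) (q : α) : Set (Rule α) :=
  {s | ∃ r' ∈ p1 (NF P) q ∪ p4 (NF P) q, ∃ D ∈ Dual q (p3 (NF P) q ∪ p4 (NF P) q),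
    D ∩ notL (Bq q r') = ∅ ∧ s = rule4 q r' D}

def gen5 (P : Set (Rule α)) (q : α) : Set (Rule α) :=
  {s | ∃ r' ∈ p1 (NF P) q ∪ p4 (NF P) q, ∃ r3 ∈ p3 (NF P) q,
    ∃ r ∈ p0 (NF P) q ∪ p2 (NF P) q, ∃ D ∈ Dual q (p4 (NF P) q),
    D ∩ notL (Bq q r') = ∅ ∧ s = rule5 q r' r3 r D}

def gen6 (P : Set (Rule α)) (q : α) : Set (Rule α) :=
  {s | ∃ r' ∈ p1 (NF P) q ∪ p4 (NF P) q, ∃ r3 ∈ p3 (NF P) q, ∃ h ∈ r'.head,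
    ∃ D ∈ Dual q ((p1 (NF P) q ∪ p4 (NF P) q) \ {r'}), s = rule6 q r' r3 h D}

def gen7 (P : Set (Rule α)) (q : α) : Set (Rule α) :=
  {s | ∃ r0 ∈ p0 (NF P) q, ∃ r3 ∈ p3 (NF P) q, ∃ r3' ∈ p3 (NF P) q, r3 ≠ r3' ∧
    ∃ D ∈ Dual q ((p0 (NF P) q ∪ p2 (NF P) q) \ {r0}), ∃ h ∈ r0.head,
    s = rule7 q r0 r3 r3' h D}

/-- The program `P''` of Definition 3. -/
def fSPpre (P : Set (Rule α)) (q : α) : Set (Rule α) :=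
  pR (NF P) q ∪ gen1a P q ∪ gen2a P q ∪ gen3a P q ∪ gen1b P q ∪ gen2b P q ∪
    gen3b P q ∪ gen4 P q ∪ gen5 P q ∪ gen6 P q ∪ gen7 P q

/-- The syntactic forgetting operator `f_SP(P,q) = NF(P'')`. -/
def fSP (P : Set (Rule α)) (q : α) : Set (Rule α) := NF (fSPpre P q)

/-! The semantic characterisation `F_SP` and criterion `Ω`. -/

/-- `R^{Y,A}_{⟨P,V⟩}`. -/
def RYA (P : Set (Rule α)) (V Y A : Finset α) : Set (Finset α) :=
  {Z | ∃ X : Finset α, (X, Y ∪ A) ∈ HTset P ∧ Z = X \ V}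

/-- `Rel^Y_{⟨P,V⟩}`. -/
def RelY (P : Set (Rule α)) (V Y : Finset α) : Set (Finset α) :=
  {A | A ⊆ V ∧ (Y ∪ A, Y ∪ A) ∈ HTset P ∧
    ¬ ∃ A' : Finset α, A' ⊂ A ∧ (Y ∪ A', Y ∪ A) ∈ HTset P}

/-- `𝓡^Y_{⟨P,V⟩}`. -/
def Rfam (P : Set (Rule α)) (V Y : Finset α) : Set (Set (Finset α)) :=
  {S | ∃ A ∈ RelY P V Y, S = RYA P V Y A}

/-- The target set of HT-models of the class `F_SP`. -/
def Msp (P : Set (Rule α)) (V : Finset α) : Set (Finset α × Finset α) :=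
  {p | p.1 ⊆ p.2 ∧ (↑p.2 : Set α) ⊆ sigmaSet P \ (↑V : Set α) ∧ p.1 ∈ ⋂₀ Rfam P V p.2}

/-- The instance `⟨P,V⟩` satisfies criterion `Ω`: for some `Y ⊆ Σ∖V`, the family
    `𝓡^Y` is non-empty and has no least element. -/
def OmegaSat (Sg : Finset α) (P : Set (Rule α)) (V : Finset α) : Prop :=
  ∃ Y : Finset α, Y ⊆ Sg \ V ∧ (Rfam P V Y).Nonempty ∧
    ¬ ∃ S ∈ Rfam P V Y, ∀ S' ∈ Rfam P V Y, S ⊆ S'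

/-! q-forgettable programs. -/

/-- A self-cycle on `q`: a rule with `q ∈ H(r)` and `q ∈ B⁻⁻(r)`. -/
def SelfCycle (q : α) (r : Rule α) : Prop := q ∈ r.head ∧ Lit.nneg q ∈ r.body

/-- `P` is q-forgettable. -/
def QForgettable (q : α) (P : Set (Rule α)) : Prop :=
  (∀ r ∈ P, q ∈ sigmaR r → SelfCycle q r) ∨
  ((⟨{q}, ∅⟩ : Rule α) ∈ P) ∨
  (∀ r ∈ P, ¬ SelfCycle q r)

/-! The semantic (counter-model based) operator `f_Sem`, relative to `Σ' = Σ(P)∖{q}`. -/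

/-- The counter-model rule `r⟨X,Y⟩` for `X ⊂ Y`. -/
def ruleXY (Sg' X Y : Finset α) : Rule α :=
  ⟨Y \ X, X.image Lit.pos ∪ (Sg' \ Y).image Lit.neg ∪ (Y \ X).image Lit.nneg⟩

/-- The counter-model rule `r⟨Y,Y⟩`. -/
def ruleYY (Sg' Y : Finset α) : Rule α :=
  ⟨∅, Y.image Lit.pos ∪ (Sg' \ Y).image Lit.neg⟩

/-- The semantic forgetting operator `f_Sem(P,q)` over signature `Σ'`. -/
def fSem (P : Set (Rule α)) (q : α) (Sg' : Finset α) : Set (Rule α) :=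
  {s | ∃ X Y : Finset α, X ⊂ Y ∧ Y ⊆ Sg' ∧ (X, Y) ∉ Msp P {q} ∧
        (Y, Y) ∈ Msp P {q} ∧ s = ruleXY Sg' X Y} ∪
  {s | ∃ Y : Finset α, Y ⊆ Sg' ∧ (Y, Y) ∉ Msp P {q} ∧ s = ruleYY Sg' Y}

/-! Distances between rules and programs. -/

/-- The size `|r| = |H(r)| + |B(r)|` of a rule. -/
def ruleSize (r : Rule α) : ℕ := r.head.card + r.body.card

/-- The distance `d(r,r')` between two rules. -/
def ruleDist (r r' : Rule α) : ℕ :=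
  ((r.head \ r'.head) ∪ (r'.head \ r.head)).card +
  ((r.body \ r'.body) ∪ (r'.body \ r.body)).card

/-- The distance induced by a mapping with domain `dom ⊆ P₁` given by `f`. -/
noncomputable def distM (P₁ P₂ dom : Set (Rule α)) (f : Rule α → Rule α) : ℕ :=
  (∑ᶠ r ∈ dom, ruleDist r (f r)) + (∑ᶠ r ∈ P₁ \ dom, ruleSize r) +
    (∑ᶠ r ∈ P₂ \ (f '' dom), ruleSize r)

/-- The distance between two programs: the minimum over all partial injective
    mappings from `P₁` to `P₂`. -/
noncomputable def progDist (P₁ P₂ : Set (Rule α)) : ℕ :=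
  sInf {n | ∃ (dom : Set (Rule α)) (f : Rule α → Rule α),
    dom ⊆ P₁ ∧ Set.InjOn f dom ∧ f '' dom ⊆ P₂ ∧ n = distM P₁ P₂ dom f}

end ASPForget

namespace ASPForget

/-!
Write `Y' = Y \ {q}` for an answer set `Y` of `P ∪ R`. As `q` does not occur in `R`, everything
reduces to `NF(P)` and the program `P''` whose normal form is `f_SP(P,q)`.

`Y'` is a model of `P''`: each derived rule contains the `q`-free part of a rule of `R0 ∪ R2`
(which fires when `q ∈ Y`) or of `R1 ∪ R4` (which fires when `q ∉ Y`), or a literal `not not h`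
with `h` in its head. When `q ∈ Y`, minimality of `Y` yields a rule `r* ∈ R3 ∪ R4` whose `q`-free
body holds in `Y'` while its `q`-free head misses `Y'`; it refutes the dual bodies in rules (4).

`Y'` is minimal: an HT-model `⟨X, Y'⟩` of `P''` with `X ⊂ Y'` lifts to an HT-model of `NF(P)`,
namely `⟨X, Y⟩` or (if `q ∈ Y`) `⟨X ∪ {q}, Y⟩`. Otherwise, rules violated by these candidates,
sorted by how `q` occurs in them and combined with `r*`, produce a derived rule that `⟨X, Y'⟩`
violates.
-/

variable {α : Type*} {X X' Y Y' : Finset α} {a q : α} {l : Lit α} {r r' : Rule α}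
  {Q : Set (Rule α)} {D : Finset (Lit α)}

lemma Lit.eq_pos_or_eq_neg_or_eq_nneg (h : l.atom = a) :
    l = Lit.pos a ∨ l = Lit.neg a ∨ l = Lit.nneg a := by
  cases l <;> subst h <;> simp [Lit.atom]

def htLit (X Y : Finset α) : Lit α → Prop
  | .pos a => a ∈ X
  | .neg a => a ∉ Y
  | .nneg a => a ∈ Y

lemma satLit_iff_htLit : satLit X l ↔ htLit X X l := by
  cases l <;> rfl

lemma htLit_mono (hX : X ⊆ X') (h : htLit X Y l) : htLit X' Y l := by
  cases l with
  | pos a => exact hX h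
  | neg a => exact h
  | nneg a => exact h

lemma htLit_negate : htLit X Y l.negate ↔ ¬ htLit Y Y l := by
  cases l <;> simp [Lit.negate, htLit]

lemma htLit_dneg : htLit X Y l.dneg ↔ htLit Y Y l := by
  cases l <;> simp [Lit.dneg, htLit]

def Violated (X Y : Finset α) (r : Rule α) : Prop :=
  (∀ l ∈ r.body, htLit X Y l) ∧ Disjoint r.head X

lemma Violated.mono (h : Violated X Y r) (hH : r'.head ⊆ r.head) (hB : r'.body ⊆ r.body) :
    Violated X Y r' :=
  ⟨fun l hl => h.1 l (hB hl), h.2.mono_left hH⟩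

lemma exists_minimalIn_le (hr : r ∈ Q) :
    ∃ r' ∈ Q, MinimalIn Q r' ∧ r'.head ⊆ r.head ∧ r'.body ⊆ r.body := by
  set D := {r' ∈ Q | r'.head ⊆ r.head ∧ r'.body ⊆ r.body}
  have hD : D.Nonempty := ⟨r, hr, subset_rfl, subset_rfl⟩
  obtain ⟨hmQ, hmH, hmB⟩ := Function.argminOn_mem ruleSize D hD
  refine ⟨_, hmQ, ?_, hmH, hmB⟩
  rintro ⟨r'', hr'', hlt⟩
  set m := Function.argminOn ruleSize D hD
  have hsize : ruleSize r'' < ruleSize m := by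
    unfold ruleSize
    rcases hlt with ⟨hH, hB⟩ | ⟨hH, hB⟩
    · have := Finset.card_le_card hH; have := Finset.card_lt_card hB; omega
    · have := Finset.card_lt_card hH; have := Finset.card_le_card hB; omega
  have hr''D : r'' ∈ D := by
    rcases hlt with ⟨hH, hB⟩ | ⟨hH, hB⟩
    exacts [⟨hr'', hH.trans hmH, hB.subset.trans hmB⟩, ⟨hr'', hH.subset.trans hmH, hB.trans hmB⟩]
  exact Function.not_lt_argminOn ruleSize D hr''D hsize

lemma not_violated_of_nneg_mem_body (hl : Lit.nneg a ∈ r.body) (ha : a ∈ Y → a ∈ r.head) :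
    ¬ Violated Y Y r :=
  fun hv => Finset.disjoint_left.1 hv.2 (ha (hv.1 _ hl)) (hv.1 _ hl)

lemma InNormalForm.eq_of_atom_eq (hQ : InNormalForm Q) (hr : r ∈ Q) {l' : Lit α}
    (hl : l ∈ r.body) (hl' : l' ∈ r.body) (h : l.atom = l'.atom) : l = l' := by
  obtain ⟨hpn, hpnn, hnnn⟩ := hQ.1 r hr l'.atom
  rcases Lit.eq_pos_or_eq_neg_or_eq_nneg h with rfl | rfl | rfl <;> rcases l' with b | b | b <;>
    simp_all [Lit.atom]

lemma InNormalForm.eq_nneg_of_mem_head (hQ : InNormalForm Q) (hr : r ∈ Q) (ha : a ∈ r.head)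
    (hl : l ∈ r.body) (h : l.atom = a) : l = Lit.nneg a := by
  obtain ⟨hp, hn⟩ := hQ.2.1 r hr a ha
  rcases Lit.eq_pos_or_eq_neg_or_eq_nneg h with rfl | rfl | rfl
  exacts [absurd hl hp, absurd hl hn, rfl]

variable [DecidableEq α]

lemma mem_bp : a ∈ r.bp ↔ Lit.pos a ∈ r.body := by
  simp only [Rule.bp, Finset.mem_image, Finset.mem_filter]
  refine ⟨?_, fun h => ⟨_, ⟨h, rfl⟩, rfl⟩⟩
  rintro ⟨_ | _ | _, ⟨hl, hp⟩, rfl⟩ <;> first | exact hl | cases hp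

lemma mem_bn : a ∈ r.bn ↔ Lit.neg a ∈ r.body := by
  simp only [Rule.bn, Finset.mem_image, Finset.mem_filter]
  refine ⟨?_, fun h => ⟨_, ⟨h, rfl⟩, rfl⟩⟩
  rintro ⟨_ | _ | _, ⟨hl, hp⟩, rfl⟩ <;> first | exact hl | cases hp

lemma mem_bnn : a ∈ r.bnn ↔ Lit.nneg a ∈ r.body := by
  simp only [Rule.bnn, Finset.mem_image, Finset.mem_filter]
  refine ⟨?_, fun h => ⟨_, ⟨h, rfl⟩, rfl⟩⟩
  rintro ⟨_ | _ | _, ⟨hl, hp⟩, rfl⟩ <;> first | exact hl | cases hp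

lemma mem_iff_of_sdiff_singleton_eq {b : α} (h : X \ {a} = X' \ {a}) (hb : b ≠ a) :
    b ∈ X ↔ b ∈ X' := by
  simpa [hb] using congrArg (b ∈ ·) h

lemma htLit_congr (hl : l.atom ≠ a) (hX : X \ {a} = X' \ {a}) (hY : Y \ {a} = Y' \ {a}) :
    htLit X Y l ↔ htLit X' Y' l := by
  cases l with
  | pos b => exact mem_iff_of_sdiff_singleton_eq hX hl
  | neg b => exact not_congr (mem_iff_of_sdiff_singleton_eq hY hl)
  | nneg b => exact mem_iff_of_sdiff_singleton_eq hY hl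

lemma violated_congr (hr : a ∉ sigmaR r) (hX : X \ {a} = X' \ {a}) (hY : Y \ {a} = Y' \ {a}) :
    Violated X Y r ↔ Violated X' Y' r := by
  have hbody : ∀ l ∈ r.body, l.atom ≠ a := fun l hl h =>
    hr (Finset.mem_union_right _ (h ▸ Finset.mem_image_of_mem _ hl))
  have hhead : ∀ b ∈ r.head, b ≠ a := fun b hb h => hr (Finset.mem_union_left _ (h ▸ hb))
  simp only [Violated, Finset.disjoint_left]
  exact and_congr (forall₂_congr fun l hl => htLit_congr (hbody l hl) hX hY)
    (forall₂_congr fun b hb => not_congr (mem_iff_of_sdiff_singleton_eq hX (hhead b hb)))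

lemma ruleSat_iff : ruleSat X r ↔ ¬ Violated X X r := by
  simp only [ruleSat, Violated, satLit_iff_htLit, not_and, Finset.not_disjoint_iff_nonempty_inter]

lemma clSat_iff : clSat X Q ↔ ∀ r ∈ Q, ¬ Violated X X r := by
  simp only [clSat, ruleSat_iff]

lemma violated_iff_reduct :
    Violated X Y r ↔ (r.bn ∩ Y = ∅ ∧ r.bnn ⊆ Y) ∧ Violated X X (posPart r) := by
  have hbody : (∀ l ∈ r.body, htLit X Y l) ↔ (∀ a, Lit.pos a ∈ r.body → a ∈ X) ∧
      (∀ a, Lit.neg a ∈ r.body → a ∉ Y) ∧ (∀ a, Lit.nneg a ∈ r.body → a ∈ Y) := by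
    refine ⟨fun h => ⟨fun a => h _, fun a => h _, fun a => h _⟩, ?_⟩
    rintro ⟨hp, hn, hnn⟩ (a | a | a) hl
    exacts [hp a hl, hn a hl, hnn a hl]
  have hpos : (∀ l ∈ (posPart r).body, htLit X X l) ↔ ∀ a, Lit.pos a ∈ r.body → a ∈ X := by
    simp only [posPart, Finset.mem_filter]
    refine ⟨fun h a ha => h _ ⟨ha, rfl⟩, ?_⟩
    rintro h (a | a | a) ⟨hl, hp⟩
    exacts [h a hl, absurd hp Bool.false_ne_true, absurd hp Bool.false_ne_true]
  simp only [Violated, hbody, hpos, Finset.eq_empty_iff_forall_notMem, Finset.mem_inter,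
    mem_bn, Finset.subset_iff, mem_bnn, not_and]
  exact ⟨fun ⟨⟨hp, hn, hnn⟩, hH⟩ => ⟨⟨hn, hnn⟩, hp, hH⟩,
    fun ⟨⟨hn, hnn⟩, hp, hH⟩ => ⟨⟨hp, hn, hnn⟩, hH⟩⟩

lemma clSat_reduct_iff : clSat X (reduct Q Y) ↔ ∀ r ∈ Q, ¬ Violated X Y r := by
  refine ⟨fun h r hr hv => ?_, ?_⟩
  · obtain ⟨⟨hbn, hbnn⟩, hv⟩ := violated_iff_reduct.1 hv
    exact ruleSat_iff.1 (h _ ⟨r, hr, hbn, hbnn, rfl⟩) hv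
  · rintro h _ ⟨r, hr, hbn, hbnn, rfl⟩
    exact ruleSat_iff.2 fun hv => h r hr (violated_iff_reduct.2 ⟨⟨hbn, hbnn⟩, hv⟩)

lemma htSat_iff :
    htSat Q X Y ↔ (∀ r ∈ Q, ¬ Violated Y Y r) ∧ ∀ r ∈ Q, ¬ Violated X Y r := by
  rw [htSat, clSat_iff, clSat_reduct_iff]

lemma htSat_union {Q' : Set (Rule α)} : htSat (Q ∪ Q') X Y ↔ htSat Q X Y ∧ htSat Q' X Y := by
  simp only [htSat_iff, Set.mem_union, or_imp, forall_and]
  tauto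

lemma htSat_congr (hQ : a ∉ sigmaSet Q) (hX : X \ {a} = X' \ {a}) (hY : Y \ {a} = Y' \ {a}) :
    htSat Q X Y ↔ htSat Q X' Y' := by
  have hfree : ∀ r ∈ Q, a ∉ sigmaR r := fun r hr h => hQ (Set.mem_biUnion hr h)
  simp only [htSat_iff]
  exact and_congr (forall₂_congr fun r hr => not_congr (violated_congr (hfree r hr) hY hY))
    (forall₂_congr fun r hr => not_congr (violated_congr (hfree r hr) hX hY))

lemma coe_subset_sigmaSet (hY : htSat Q Y Y) (hmin : ∀ X ⊂ Y, ¬ htSat Q X Y) :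
    (↑Y : Set α) ⊆ sigmaSet Q := by
  intro a ha
  by_contra hna
  refine hmin (Y.erase a) (Finset.erase_ssubset ha) ((htSat_congr hna ?_ rfl).2 hY)
  ext b
  simp only [Finset.mem_sdiff, Finset.mem_erase, Finset.mem_singleton]
  tauto

lemma not_violated_of_tautological (hXY : X ⊆ Y) (ht : Tautological r) : ¬ Violated X Y r := by
  rintro ⟨hB, hH⟩
  rcases ht with ⟨a, ha⟩ | ⟨a, ha⟩ | ⟨a, ha⟩ <;>
    simp only [Finset.mem_inter, mem_bp, mem_bn, mem_bnn] at ha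
  · exact Finset.disjoint_left.1 hH ha.1 (hB _ ha.2)
  · exact (hB _ ha.2 : a ∉ Y) (hXY (hB _ ha.1))
  · exact (hB _ ha.1 : a ∉ Y) (hB _ ha.2)

lemma mem_nfRule_body : l ∈ (nfRule r).body ↔ l ∈ r.body ∧ ¬(l.isNneg = true ∧ l.atom ∈ r.bp) :=
  Finset.mem_filter

lemma violated_nfRule_iff (hXY : X ⊆ Y) : Violated X Y (nfRule r) ↔ Violated X Y r := by
  refine ⟨fun ⟨hB, hH⟩ => ⟨fun l hl => ?_, ?_⟩,
    fun h => h.mono Finset.sdiff_subset (Finset.filter_subset _ _)⟩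
  · by_cases hc : l.isNneg = true ∧ l.atom ∈ r.bp
    · obtain ⟨hnn, hbp⟩ := hc
      rcases l with a | a | a <;> simp only [Lit.isNneg, Bool.false_eq_true] at hnn
      exact hXY (hB (Lit.pos a) (mem_nfRule_body.2 ⟨mem_bp.1 hbp, by simp [Lit.isNneg]⟩))
    · exact hB l (mem_nfRule_body.2 ⟨hl, hc⟩)
  · refine Finset.disjoint_left.2 fun a ha haX => ?_
    by_cases hbn : a ∈ r.bn
    · exact hB (Lit.neg a) (mem_nfRule_body.2 ⟨mem_bn.1 hbn, by simp [Lit.isNneg]⟩) (hXY haX)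
    · exact Finset.disjoint_left.1 hH (Finset.mem_sdiff.2 ⟨ha, hbn⟩) haX

lemma forall_not_violated_NF_iff (hXY : X ⊆ Y) :
    (∀ r ∈ NF Q, ¬ Violated X Y r) ↔ ∀ r ∈ Q, ¬ Violated X Y r := by
  refine ⟨fun h r hr hv => ?_, ?_⟩
  · by_cases ht : Tautological r
    · exact not_violated_of_tautological hXY ht hv
    obtain ⟨r', hr', hmin, hH, hB⟩ :=
      exists_minimalIn_le (Q := nfRule '' {r ∈ Q | ¬ Tautological r}) ⟨r, ⟨hr, ht⟩, rfl⟩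
    exact h r' ⟨hr', hmin⟩ (((violated_nfRule_iff hXY).2 hv).mono hH hB)
  · rintro h _ ⟨⟨r, ⟨hr, -⟩, rfl⟩, -⟩ hv
    exact h r hr ((violated_nfRule_iff hXY).1 hv)

lemma htSat_NF_iff (hXY : X ⊆ Y) : htSat (NF Q) X Y ↔ htSat Q X Y := by
  rw [htSat_iff, htSat_iff, forall_not_violated_NF_iff subset_rfl, forall_not_violated_NF_iff hXY]

lemma NF_finite (hQ : Q.Finite) : (NF Q).Finite :=
  ((hQ.sep _).image nfRule).subset (Set.sep_subset _ _)

lemma NF_inNormalForm : InNormalForm (NF Q) := by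
  refine ⟨?_, ?_, fun s hs ⟨r', hr', h⟩ => hs.2 ⟨r', hr'.1, h⟩⟩ <;>
    rintro _ ⟨⟨r, ⟨-, ht⟩, rfl⟩, -⟩ a <;> simp only [mem_nfRule_body]
  · refine ⟨fun ⟨hp, hn⟩ => ht (.inr (.inl ⟨a, Finset.mem_inter.2 ⟨mem_bp.2 hp.1, mem_bn.2 hn.1⟩⟩)),
      fun ⟨hp, hnn⟩ => hnn.2 ⟨rfl, mem_bp.2 hp.1⟩,
      fun ⟨hn, hnn⟩ => ht (.inr (.inr ⟨a, Finset.mem_inter.2 ⟨mem_bn.2 hn.1, mem_bnn.2 hnn.1⟩⟩))⟩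
  · intro ha
    rw [nfRule, Finset.mem_sdiff] at ha
    exact ⟨fun hp => ht (.inl ⟨a, Finset.mem_inter.2 ⟨ha.1, mem_bp.2 hp.1⟩⟩),
      fun hn => ha.2 (mem_bn.2 hn.1)⟩

lemma mem_partition (hr : r ∈ Q) (q : α) :
    r ∈ pR Q q ∨ r ∈ p0 Q q ∨ r ∈ p1 Q q ∨ r ∈ p2 Q q ∨ r ∈ p3 Q q ∨ r ∈ p4 Q q := by
  by_cases h0 : Lit.pos q ∈ r.body
  · exact .inr (.inl ⟨hr, h0⟩)
  by_cases h1 : Lit.neg q ∈ r.body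
  · exact .inr (.inr (.inl ⟨hr, h1⟩))
  by_cases hh : q ∈ r.head <;> by_cases h2 : Lit.nneg q ∈ r.body
  · exact .inr (.inr (.inr (.inr (.inl ⟨hr, h2, hh⟩))))
  · exact .inr (.inr (.inr (.inr (.inr ⟨hr, h2, hh⟩))))
  · exact .inr (.inr (.inr (.inl ⟨hr, h2, hh⟩)))
  · refine .inl ⟨hr, ?_⟩
    simp only [sigmaR, Finset.mem_union, Finset.mem_image, not_or, not_exists, not_and]
    refine ⟨hh, fun l hl hlq => ?_⟩
    rcases Lit.eq_pos_or_eq_neg_or_eq_nneg hlq with rfl | rfl | rfl <;> contradiction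

lemma mem_Bq : l ∈ Bq q r ↔ l ∈ r.body ∧ l.atom ≠ q :=
  Finset.mem_filter

lemma Bq_subset : Bq q r ⊆ r.body :=
  Finset.filter_subset _ _

lemma Hq_subset : Hq q r ⊆ r.head :=
  Finset.erase_subset _ _

lemma forall_mem_Bq_htLit (h : ∀ l ∈ r.body, htLit X Y l) (hX : X \ {q} = X' \ {q})
    (hY : Y \ {q} = Y' \ {q}) : ∀ l ∈ Bq q r, htLit X' Y' l := fun l hl =>
  (htLit_congr (mem_Bq.1 hl).2 hX hY).1 (h l (mem_Bq.1 hl).1)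

lemma forall_mem_notA_htLit {A : Finset α} : (∀ l ∈ notA A, htLit X Y l) ↔ Disjoint A Y := by
  simp [notA, htLit, Finset.disjoint_left]

lemma forall_mem_dnegL_htLit {S : Finset (Lit α)} :
    (∀ l ∈ dnegL S, htLit X Y l) ↔ ∀ l ∈ S, htLit Y Y l := by
  simp [dnegL, htLit_dneg]

def strip (q : α) (r : Rule α) : Rule α :=
  ⟨Hq q r, Bq q r⟩

lemma not_violated_strip (hr : ¬ Violated Y Y r) (hlit : ∀ l ∈ r.body, l.atom = q → htLit Y Y l)
    (hhead : q ∈ r.head → q ∉ Y) : ¬ Violated (Y \ {q}) (Y \ {q}) (strip q r) := by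
  rintro ⟨hB, hH⟩
  refine hr ⟨fun l hl => ?_, Finset.disjoint_left.2 fun b hb hbY => ?_⟩
  · by_cases hlq : l.atom = q
    · exact hlit l hl hlq
    · exact (htLit_congr hlq (Finset.sdiff_idem Y {q}) (Finset.sdiff_idem Y {q})).1
        (hB l (mem_Bq.2 ⟨hl, hlq⟩))
  · by_cases hbq : b = q
    · exact hhead (hbq ▸ hb) (hbq ▸ hbY)
    · exact Finset.disjoint_left.1 hH (Finset.mem_erase.2 ⟨hbq, hb⟩)
        (Finset.mem_sdiff.2 ⟨hbY, by simpa using hbq⟩)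

-- A member of `Dual q Q` holds in `Y` exactly when `Y` satisfies `strip q u` for every `u ∈ Q`
-- (this lemma and the next).
lemma exists_mem_Dual (hQ : Q.Finite) (h : ∀ u ∈ Q, ¬ Violated Y Y (strip q u)) (X : Finset α) :
    ∃ D ∈ Dual q Q, ∀ d ∈ D, htLit X Y d := by
  set F := {u ∈ Q | ∃ l ∈ Bq q u, ¬ htLit Y Y l}
  have hT : ∀ u ∈ Q \ F, ∃ a ∈ Hq q u, a ∈ Y := fun u hu => by
    by_contra! hc
    exact h u hu.1 ⟨fun l hl => by_contra fun hl' => hu.2 ⟨hu.1, l, hl, hl'⟩,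
      Finset.disjoint_left.2 hc⟩
  have : Nonempty α := ⟨q⟩
  have : Nonempty (Lit α) := ⟨.pos q⟩
  choose! bf hbf using fun u (hu : u ∈ F) => hu.2
  choose! hf hhf using hT
  have hfin : ((fun u => (bf u).negate) '' F ∪ (fun u => Lit.nneg (hf u)) '' (Q \ F)).Finite :=
    ((hQ.sep _).image _).union (hQ.sdiff.image _)
  refine ⟨hfin.toFinset, ⟨F, Q \ F, bf, hf, Set.union_sdiff_cancel (Set.sep_subset _ _),
    Set.disjoint_sdiff_right, fun u hu => (hbf u hu).1, fun u hu => (hhf u hu).1,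
    hfin.coe_toFinset⟩, ?_⟩
  rintro _ hd
  rcases hfin.mem_toFinset.1 hd with ⟨u, hu, rfl⟩ | ⟨u, hu, rfl⟩
  · exact htLit_negate.2 (hbf u hu).2
  · exact (hhf u hu).2

lemma not_violated_strip_of_mem_Dual {u : Rule α} (hD : D ∈ Dual q Q)
    (h : ∀ d ∈ D, htLit X Y d) (hu : u ∈ Q) : ¬ Violated Y Y (strip q u) := by
  obtain ⟨F, T, bf, hf, rfl, -, hbf, hhf, hD⟩ := hD
  have hsat : ∀ d ∈ (fun u => (bf u).negate) '' F ∪ (fun u => Lit.nneg (hf u)) '' T,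
      htLit X Y d := fun d hd => h d (by rwa [← Finset.mem_coe, hD])
  rintro ⟨hB, hH⟩
  rcases hu with hu | hu
  · exact htLit_negate.1 (hsat _ (.inl ⟨u, hu, rfl⟩)) (hB _ (hbf u hu))
  · exact Finset.disjoint_left.1 hH (hhf u hu) (hsat _ (.inr ⟨u, hu, rfl⟩))

lemma inter_notL_eq_empty {S : Finset (Lit α)} (hD : ∀ d ∈ D, htLit X Y d)
    (hS : ∀ l ∈ S, htLit Y Y l) : D ∩ notL S = ∅ := by
  simp only [Finset.eq_empty_iff_forall_notMem, Finset.mem_inter, notL, Finset.mem_image]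
  rintro _ ⟨hd, l, hl, rfl⟩
  exact htLit_negate.1 (hD _ hd) (hS l hl)

section Forgetting

variable {P : Set (Rule α)} {rs r0 r2 r3 r4 : Rule α}

lemma not_violated_strip_of_mem (hY : ∀ r ∈ NF P, ¬ Violated Y Y r) (hq : q ∈ Y)
    (hr : r ∈ p0 (NF P) q ∪ p2 (NF P) q) : ¬ Violated (Y \ {q}) (Y \ {q}) (strip q r) := by
  rcases hr with ⟨hr, hpos⟩ | ⟨hr, hnn, hqh⟩
  · refine not_violated_strip (hY r hr) (fun l hl hlq => ?_) fun hqh => ?_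
    · rw [NF_inNormalForm.eq_of_atom_eq hr hl hpos hlq]
      exact hq
    · cases NF_inNormalForm.eq_nneg_of_mem_head hr hqh hpos rfl
  · refine not_violated_strip (hY r hr) (fun l hl hlq => ?_) fun h => absurd h hqh
    rw [NF_inNormalForm.eq_of_atom_eq hr hl hnn hlq]
    exact hq

lemma not_violated_strip_of_not_mem (hY : ∀ r ∈ NF P, ¬ Violated Y Y r) (hq : q ∉ Y)
    (hr : r ∈ p1 (NF P) q ∪ p4 (NF P) q) : ¬ Violated (Y \ {q}) (Y \ {q}) (strip q r) := by
  rcases hr with ⟨hr, hneg⟩ | ⟨hr, hnn, hqh⟩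
  · refine not_violated_strip (hY r hr) (fun l hl hlq => ?_) fun _ => hq
    rw [NF_inNormalForm.eq_of_atom_eq hr hl hneg hlq]
    exact hq
  · refine not_violated_strip (hY r hr) (fun l hl hlq => ?_) fun _ => hq
    exact absurd (NF_inNormalForm.eq_nneg_of_mem_head hr hqh hl hlq ▸ hl) hnn

lemma Bq_eq_body_of_mem_p4 (hr : r ∈ p4 (NF P) q) : Bq q r = r.body :=
  Finset.filter_true_of_mem fun _ hl hlq =>
    hr.2.1 (NF_inNormalForm.eq_nneg_of_mem_head hr.1 hr.2.2 hl hlq ▸ hl)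

lemma exists_witness (hY : ∀ r ∈ NF P, ¬ Violated Y Y r) (hrs : rs ∈ NF P)
    (hv : Violated (Y \ {q}) Y rs) :
    rs ∈ p3 (NF P) q ∪ p4 (NF P) q ∧ Violated (Y \ {q}) (Y \ {q}) (strip q rs) := by
  have hqh : q ∈ rs.head := by
    by_contra hqh
    refine hY rs hrs ⟨fun l hl => htLit_mono Finset.sdiff_subset (hv.1 l hl),
      Finset.disjoint_left.2 fun b hb hbY => Finset.disjoint_left.1 hv.2 hb ?_⟩
    exact Finset.mem_sdiff.2 ⟨hbY, fun h => hqh (Finset.mem_singleton.1 h ▸ hb)⟩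
  refine ⟨?_, forall_mem_Bq_htLit hv.1 rfl (Finset.sdiff_idem Y {q}).symm,
    hv.2.mono_left Hq_subset⟩
  by_cases hnn : Lit.nneg q ∈ rs.body
  exacts [.inl ⟨hrs, hnn, hqh⟩, .inr ⟨hrs, hnn, hqh⟩]

lemma pR_subset_fSPpre : pR (NF P) q ⊆ fSPpre P q :=
  fun _ h => by simp only [fSPpre, Set.mem_union, h, true_or]
lemma gen1a_subset_fSPpre : gen1a P q ⊆ fSPpre P q :=
  fun _ h => by simp only [fSPpre, Set.mem_union, h, true_or, or_true]
lemma gen2a_subset_fSPpre : gen2a P q ⊆ fSPpre P q :=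
  fun _ h => by simp only [fSPpre, Set.mem_union, h, true_or, or_true]
lemma gen3a_subset_fSPpre : gen3a P q ⊆ fSPpre P q :=
  fun _ h => by simp only [fSPpre, Set.mem_union, h, true_or, or_true]
lemma gen1b_subset_fSPpre : gen1b P q ⊆ fSPpre P q :=
  fun _ h => by simp only [fSPpre, Set.mem_union, h, true_or, or_true]
lemma gen3b_subset_fSPpre : gen3b P q ⊆ fSPpre P q :=
  fun _ h => by simp only [fSPpre, Set.mem_union, h, true_or, or_true]
lemma gen4_subset_fSPpre : gen4 P q ⊆ fSPpre P q :=
  fun _ h => by simp only [fSPpre, Set.mem_union, h, true_or, or_true]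
lemma gen6_subset_fSPpre : gen6 P q ⊆ fSPpre P q :=
  fun _ h => by simp only [fSPpre, Set.mem_union, h, true_or, or_true]
lemma gen7_subset_fSPpre : gen7 P q ⊆ fSPpre P q :=
  fun _ h => by simp only [fSPpre, Set.mem_union, h, or_true]

lemma not_violated_rule1a (hY : ∀ r ∈ NF P, ¬ Violated Y Y r) (hr0 : r0 ∈ p0 (NF P) q)
    (hr4 : r4 ∈ p4 (NF P) q) : ¬ Violated (Y \ {q}) (Y \ {q}) (rule1a q r0 r4) := by
  intro hv
  simp only [Violated, rule1a, Finset.forall_mem_union, Finset.disjoint_union_left] at hv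
  obtain ⟨⟨hB0, hB4⟩, hH0, hH4⟩ := hv
  by_cases hq : q ∈ Y
  · exact not_violated_strip_of_mem hY hq (.inl hr0) ⟨hB0, hH0.mono_left Hq_subset⟩
  · exact not_violated_strip_of_not_mem hY hq (.inr hr4) ⟨fun l hl => hB4 l (Bq_subset hl), hH4⟩

lemma not_violated_rule2a (hY : ∀ r ∈ NF P, ¬ Violated Y Y r) (hr0 : r0 ∈ p0 (NF P) q)
    (hr' : r' ∈ p1 (NF P) q ∪ p4 (NF P) q) :
    ¬ Violated (Y \ {q}) (Y \ {q}) (rule2a q r0 r3 r') := by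
  intro hv
  simp only [Violated, rule2a, Finset.forall_mem_union, forall_mem_notA_htLit,
    forall_mem_dnegL_htLit, Finset.disjoint_union_left] at hv
  obtain ⟨⟨⟨⟨hB0, -⟩, hH'⟩, hB'⟩, hH0, -⟩ := hv
  by_cases hq : q ∈ Y
  · exact not_violated_strip_of_mem hY hq (.inl hr0) ⟨hB0, hH0.mono_left Hq_subset⟩
  · exact not_violated_strip_of_not_mem hY hq hr' ⟨hB', hH'⟩

lemma not_violated_rule1b (hY : ∀ r ∈ NF P, ¬ Violated Y Y r) (hr2 : r2 ∈ p2 (NF P) q)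
    (hr4 : r4 ∈ p4 (NF P) q) : ¬ Violated (Y \ {q}) (Y \ {q}) (rule1b q r2 r4) := by
  intro hv
  simp only [Violated, rule1b, Finset.forall_mem_union, forall_mem_notA_htLit,
    forall_mem_dnegL_htLit] at hv
  obtain ⟨⟨⟨hB2, hH4⟩, hB4⟩, hH2⟩ := hv
  by_cases hq : q ∈ Y
  · exact not_violated_strip_of_mem hY hq (.inr hr2) ⟨hB2, hH2.mono_left Hq_subset⟩
  · exact not_violated_strip_of_not_mem hY hq (.inr hr4) ⟨fun l hl => hB4 l (Bq_subset hl), hH4⟩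

lemma not_violated_rule2b (hY : ∀ r ∈ NF P, ¬ Violated Y Y r) (hr2 : r2 ∈ p2 (NF P) q)
    (hr' : r' ∈ p1 (NF P) q ∪ p4 (NF P) q) :
    ¬ Violated (Y \ {q}) (Y \ {q}) (rule2b q r2 r3 r') := by
  intro hv
  simp only [Violated, rule2b, Finset.forall_mem_union, forall_mem_notA_htLit,
    forall_mem_dnegL_htLit, Finset.disjoint_union_left] at hv
  obtain ⟨⟨⟨hB2, -, hH'⟩, -, hB'⟩, hH2⟩ := hv
  by_cases hq : q ∈ Y
  · exact not_violated_strip_of_mem hY hq (.inr hr2) ⟨hB2, hH2.mono_left Hq_subset⟩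
  · exact not_violated_strip_of_not_mem hY hq hr' ⟨hB', hH'⟩

lemma not_violated_rule4 (hY : ∀ r ∈ NF P, ¬ Violated Y Y r)
    (hwit : q ∈ Y → ∃ rs ∈ p3 (NF P) q ∪ p4 (NF P) q, Violated (Y \ {q}) (Y \ {q}) (strip q rs))
    (hr' : r' ∈ p1 (NF P) q ∪ p4 (NF P) q) (hD : D ∈ Dual q (p3 (NF P) q ∪ p4 (NF P) q)) :
    ¬ Violated (Y \ {q}) (Y \ {q}) (rule4 q r' D) := by
  intro hv
  simp only [Violated, rule4, Finset.forall_mem_union] at hv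
  obtain ⟨⟨hB', hDsat⟩, hH'⟩ := hv
  by_cases hq : q ∈ Y
  · obtain ⟨rs, hrs, hvs⟩ := hwit hq
    exact not_violated_strip_of_mem_Dual hD hDsat hrs hvs
  · exact not_violated_strip_of_not_mem hY hq hr' ⟨hB', hH'⟩

lemma not_violated_rule5 {r : Rule α} (hY : ∀ r ∈ NF P, ¬ Violated Y Y r)
    (hr' : r' ∈ p1 (NF P) q ∪ p4 (NF P) q) (hr : r ∈ p0 (NF P) q ∪ p2 (NF P) q) :
    ¬ Violated (Y \ {q}) (Y \ {q}) (rule5 q r' r3 r D) := by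
  intro hv
  simp only [Violated, rule5, Finset.forall_mem_union, forall_mem_notA_htLit,
    forall_mem_dnegL_htLit, Finset.disjoint_union_left] at hv
  obtain ⟨⟨⟨⟨hB', hHr, -⟩, hBr, -⟩, -⟩, hH'⟩ := hv
  by_cases hq : q ∈ Y
  · exact not_violated_strip_of_mem hY hq hr ⟨hBr, hHr.mono_left Hq_subset⟩
  · exact not_violated_strip_of_not_mem hY hq hr' ⟨hB', hH'⟩

lemma not_violated_fSPpre (hY : ∀ r ∈ NF P, ¬ Violated Y Y r)
    (hwit : q ∈ Y → ∃ rs ∈ p3 (NF P) q ∪ p4 (NF P) q, Violated (Y \ {q}) (Y \ {q}) (strip q rs)) :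
    ∀ s ∈ fSPpre P q, ¬ Violated (Y \ {q}) (Y \ {q}) s := by
  rintro s ((((((((((hs | ⟨r0, hr0, r4, hr4, rfl⟩) | ⟨r0, hr0, r3, -, r', hr', rfl⟩) |
    ⟨r0, -, r3, -, h, hh, D, -, rfl⟩) | ⟨r2, hr2, r4, hr4, rfl⟩) |
    ⟨r2, hr2, r3, -, r', hr', rfl⟩) | ⟨r2, -, r3, -, h, hh, D, -, rfl⟩) |
    ⟨r', hr', D, hD, -, rfl⟩) | ⟨r', hr', r3, -, r, hr, D, -, -, rfl⟩) |
    ⟨r', -, r3, -, h, hh, D, -, rfl⟩) | ⟨r0, -, r3, -, r3', -, -, D, -, h, hh, rfl⟩)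
  · exact fun hv => hY s hs.1
      ((violated_congr hs.2 (Finset.sdiff_idem Y {q}) (Finset.sdiff_idem Y {q})).1 hv)
  · exact not_violated_rule1a hY hr0 hr4
  · exact not_violated_rule2a hY hr0 hr'
  · exact not_violated_of_nneg_mem_body (by simp [rule3a]) fun _ => hh
  · exact not_violated_rule1b hY hr2 hr4
  · exact not_violated_rule2b hY hr2 hr'
  · exact not_violated_of_nneg_mem_body (by simp [rule3b]) fun _ => hh
  · exact not_violated_rule4 hY hwit hr' hD
  · exact not_violated_rule5 hY hr' hr
  · exact not_violated_of_nneg_mem_body (by simp [rule6]) fun hhY =>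
      Finset.mem_erase.2 ⟨fun e => by simp [e] at hhY, hh⟩
  · exact not_violated_of_nneg_mem_body (by simp [rule7]) fun _ => Finset.mem_union_left _ hh

lemma exists_mem_Dual_of_mem (hP : P.Finite) (hY : ∀ r ∈ NF P, ¬ Violated Y Y r) (hq : q ∈ Y)
    (r : Rule α) (X : Finset α) :
    ∃ D ∈ Dual q ((p0 (NF P) q ∪ p2 (NF P) q) \ {r}), ∀ d ∈ D, htLit X (Y \ {q}) d :=
  exists_mem_Dual ((NF_finite hP).subset (Set.sdiff_subset.trans
    (Set.union_subset (Set.sep_subset _ _) (Set.sep_subset _ _))))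
    (fun _ hu => not_violated_strip_of_mem hY hq hu.1) X

lemma exists_mem_Dual_of_not_mem (hP : P.Finite) (hY : ∀ r ∈ NF P, ¬ Violated Y Y r)
    (hq : q ∉ Y) (r : Rule α) (X : Finset α) :
    ∃ D ∈ Dual q ((p1 (NF P) q ∪ p4 (NF P) q) \ {r}), ∀ d ∈ D, htLit X (Y \ {q}) d :=
  exists_mem_Dual ((NF_finite hP).subset (Set.sdiff_subset.trans
    (Set.union_subset (Set.sep_subset _ _) (Set.sep_subset _ _))))
    (fun _ hu => not_violated_strip_of_not_mem hY hq hu.1) X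

lemma exists_violated_fSPpre_of_pR (hr : r ∈ pR (NF P) q) (hX : X' \ {q} = X \ {q})
    (hv : Violated X' Y r) : ∃ s ∈ fSPpre P q, Violated X (Y \ {q}) s :=
  ⟨r, pR_subset_fSPpre hr, (violated_congr hr.2 hX (Finset.sdiff_idem Y {q}).symm).1 hv⟩

lemma exists_violated_fSPpre_of_p1_p4 (hP : P.Finite) (hY : ∀ r ∈ NF P, ¬ Violated Y Y r)
    (hq : q ∉ Y) (hXY : X ⊆ Y \ {q}) (hr : r ∈ p1 (NF P) q ∪ p4 (NF P) q)
    (hv : Violated X Y r) : ∃ s ∈ fSPpre P q, Violated X (Y \ {q}) s := by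
  have hB := forall_mem_Bq_htLit hv.1 rfl (Finset.sdiff_idem Y {q}).symm
  have hH : Disjoint (Hq q r) X := hv.2.mono_left Hq_subset
  obtain ⟨b, hbr, hbY⟩ := Finset.not_disjoint_iff.1 fun hd => hY r (hr.elim (·.1) (·.1))
    ⟨fun l hl => htLit_mono (hXY.trans Finset.sdiff_subset) (hv.1 l hl), hd⟩
  have hbY' : b ∈ Y \ {q} :=
    Finset.mem_sdiff.2 ⟨hbY, fun h => hq (Finset.mem_singleton.1 h ▸ hbY)⟩
  by_cases hbad : ∃ t ∈ p3 (NF P) q, Violated (Y \ {q}) (Y \ {q}) (strip q t)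
  · obtain ⟨t, ht, hvt⟩ := hbad
    obtain ⟨D, hD, hDsat⟩ := exists_mem_Dual_of_not_mem hP hY hq r X
    refine ⟨_, gen6_subset_fSPpre ⟨r, hr, t, ht, b, hbr, D, hD, rfl⟩, ?_, hH⟩
    simp only [rule6, Finset.forall_mem_union, forall_mem_notA_htLit, forall_mem_dnegL_htLit,
      Finset.mem_singleton, forall_eq]
    exact ⟨⟨⟨⟨hB, hvt.2⟩, hvt.1⟩, hbY'⟩, hDsat⟩
  · push Not at hbad
    obtain ⟨D, hD, hDsat⟩ := exists_mem_Dual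
      ((NF_finite hP).subset (Set.union_subset (Set.sep_subset _ _) (Set.sep_subset _ _)))
      (fun u hu => hu.elim (hbad u) fun h4 => not_violated_strip_of_not_mem hY hq (.inr h4)) X
    have hdisj := inter_notL_eq_empty hDsat fun l hl => htLit_mono hXY (hB l hl)
    refine ⟨_, gen4_subset_fSPpre ⟨r, hr, D, hD, hdisj, rfl⟩, ?_, hH⟩
    simp only [rule4, Finset.forall_mem_union]
    exact ⟨hB, hDsat⟩

lemma lift_of_not_mem (hP : P.Finite) (hY : ∀ r ∈ NF P, ¬ Violated Y Y r) (hq : q ∉ Y)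
    (hXY : X ⊆ Y \ {q}) (hX : ¬ ∃ s ∈ fSPpre P q, Violated X (Y \ {q}) s) :
    ∀ r ∈ NF P, ¬ Violated X Y r := by
  intro r hr hv
  rcases mem_partition hr q with h | h | h | h | h | h
  · exact hX (exists_violated_fSPpre_of_pR h rfl hv)
  · exact hq ((hXY.trans Finset.sdiff_subset) (hv.1 _ h.2))
  · exact hX (exists_violated_fSPpre_of_p1_p4 hP hY hq hXY (.inl h) hv)
  · exact hq (hv.1 _ h.2.1)
  · exact hq (hv.1 _ h.2.1)
  · exact hX (exists_violated_fSPpre_of_p1_p4 hP hY hq hXY (.inr h) hv)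

lemma exists_violated_fSPpre_of_p2 (hP : P.Finite) (hY : ∀ r ∈ NF P, ¬ Violated Y Y r)
    (hq : q ∈ Y) (hrs : rs ∈ p3 (NF P) q ∪ p4 (NF P) q)
    (hvs : Violated (Y \ {q}) (Y \ {q}) (strip q rs)) (hXY : X ⊆ Y \ {q})
    (hr : r2 ∈ p2 (NF P) q) (hB : ∀ l ∈ Bq q r2, htLit X (Y \ {q}) l)
    (hH : Disjoint r2.head X) : ∃ s ∈ fSPpre P q, Violated X (Y \ {q}) s := by
  rcases hrs with hrs | hrs
  · obtain ⟨b, hb, hbY⟩ := Finset.not_disjoint_iff.1 fun hd =>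
      not_violated_strip_of_mem hY hq (.inr hr) ⟨fun l hl => htLit_mono hXY (hB l hl), hd⟩
    obtain ⟨D, hD, hDsat⟩ := exists_mem_Dual_of_mem hP hY hq r2 X
    refine ⟨_, gen3b_subset_fSPpre ⟨r2, hr, rs, hrs, b, Hq_subset hb, D, hD, rfl⟩, ?_, hH⟩
    simp only [rule3b, Finset.forall_mem_union, forall_mem_notA_htLit, forall_mem_dnegL_htLit,
      Finset.mem_singleton, forall_eq]
    exact ⟨⟨⟨⟨hB, hvs.2⟩, hvs.1⟩, hbY⟩, hDsat⟩
  · refine ⟨_, gen1b_subset_fSPpre ⟨r2, hr, rs, hrs, rfl⟩, ?_, hH⟩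
    simp only [rule1b, Finset.forall_mem_union, forall_mem_notA_htLit, forall_mem_dnegL_htLit,
      ← Bq_eq_body_of_mem_p4 hrs]
    exact ⟨⟨hB, hvs.2⟩, hvs.1⟩

lemma exists_violated_fSPpre_of_p3_p0 (hP : P.Finite) (hY : ∀ r ∈ NF P, ¬ Violated Y Y r)
    (hq : q ∈ Y) (hrs : rs ∈ p3 (NF P) q ∪ p4 (NF P) q)
    (hvs : Violated (Y \ {q}) (Y \ {q}) (strip q rs)) (hXY : X ⊆ Y \ {q})
    (hr3 : r3 ∈ p3 (NF P) q) (hB3 : ∀ l ∈ Bq q r3, htLit X (Y \ {q}) l)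
    (hH3 : Disjoint (Hq q r3) X) (hr0 : r0 ∈ p0 (NF P) q)
    (hB0 : ∀ l ∈ Bq q r0, htLit X (Y \ {q}) l) (hH0 : Disjoint r0.head X) :
    ∃ s ∈ fSPpre P q, Violated X (Y \ {q}) s := by
  rcases hrs with hrs | hrs
  · obtain ⟨b, hb, hbY⟩ := Finset.not_disjoint_iff.1 fun hd =>
      not_violated_strip_of_mem hY hq (.inl hr0) ⟨fun l hl => htLit_mono hXY (hB0 l hl), hd⟩
    obtain ⟨D, hD, hDsat⟩ := exists_mem_Dual_of_mem hP hY hq r0 X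
    by_cases heq : rs = r3
    · subst heq
      refine ⟨_, gen3a_subset_fSPpre ⟨r0, hr0, rs, hrs, b, Hq_subset hb, D, hD, rfl⟩, ?_, hH0⟩
      simp only [rule3a, Finset.forall_mem_union, forall_mem_notA_htLit, Finset.mem_singleton,
        forall_eq]
      exact ⟨⟨⟨⟨hB0, hbY⟩, hDsat⟩, hB3⟩, hvs.2⟩
    · refine ⟨_, gen7_subset_fSPpre ⟨r0, hr0, r3, hr3, rs, hrs, Ne.symm heq, D, hD, b,
        Hq_subset hb, rfl⟩, ?_, Finset.disjoint_union_left.2 ⟨hH0, hH3⟩⟩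
      simp only [rule7, Finset.forall_mem_union, forall_mem_notA_htLit, forall_mem_dnegL_htLit,
        Finset.mem_singleton, forall_eq]
      exact ⟨⟨⟨⟨⟨hB0, hB3⟩, hvs.2⟩, hvs.1⟩, hbY⟩, hDsat⟩
  · refine ⟨_, gen2a_subset_fSPpre ⟨r0, hr0, r3, hr3, rs, .inr hrs, rfl⟩, ?_,
      Finset.disjoint_union_left.2 ⟨hH0, hH3⟩⟩
    simp only [rule2a, Finset.forall_mem_union, forall_mem_notA_htLit, forall_mem_dnegL_htLit]
    exact ⟨⟨⟨hB0, hB3⟩, hvs.2⟩, hvs.1⟩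

lemma lift_of_mem (hP : P.Finite) (hY : ∀ r ∈ NF P, ¬ Violated Y Y r) (hq : q ∈ Y)
    (hrs : rs ∈ p3 (NF P) q ∪ p4 (NF P) q) (hvs : Violated (Y \ {q}) (Y \ {q}) (strip q rs))
    (hXY : X ⊆ Y \ {q}) (hX : ¬ ∃ s ∈ fSPpre P q, Violated X (Y \ {q}) s) :
    (∀ r ∈ NF P, ¬ Violated X Y r) ∨ ∀ r ∈ NF P, ¬ Violated (insert q X) Y r := by
  by_contra! ⟨⟨ra, hra, hva⟩, rb, hrb, hvb⟩
  have hYY := (Finset.sdiff_idem Y {q}).symm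
  have hXX : insert q X \ {q} = X \ {q} :=
    Finset.insert_sdiff_of_mem _ (Finset.mem_singleton_self q)
  have hBa := forall_mem_Bq_htLit hva.1 rfl hYY
  have hBb := forall_mem_Bq_htLit hvb.1 hXX hYY
  have hHb : Disjoint rb.head X := hvb.2.mono_right (Finset.subset_insert q X)
  apply hX
  rcases mem_partition hrb q with hb | hb | hb | hb | hb | hb
  · exact exists_violated_fSPpre_of_pR hb hXX hvb
  · rcases mem_partition hra q with ha | ha | ha | ha | ha | ha
    · exact exists_violated_fSPpre_of_pR ha rfl hva
    · exact absurd (hXY (hva.1 _ ha.2)) (by simp)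
    · exact absurd hq (hva.1 _ ha.2)
    · exact exists_violated_fSPpre_of_p2 hP hY hq hrs hvs hXY ha hBa hva.2
    · exact exists_violated_fSPpre_of_p3_p0 hP hY hq hrs hvs hXY ha hBa
        (hva.2.mono_left Hq_subset) hb hBb hHb
    · refine ⟨_, gen1a_subset_fSPpre ⟨rb, hb, ra, ha, rfl⟩, ?_,
        Finset.disjoint_union_left.2 ⟨hHb, hva.2.mono_left Hq_subset⟩⟩
      simp only [rule1a, Finset.forall_mem_union, ← Bq_eq_body_of_mem_p4 ha]
      exact ⟨hBb, hBa⟩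
  · exact absurd hq (hvb.1 _ hb.2)
  · exact exists_violated_fSPpre_of_p2 hP hY hq hrs hvs hXY hb hBb hHb
  · exact absurd (Finset.mem_insert_self q X) (Finset.disjoint_left.1 hvb.2 hb.2.2)
  · exact absurd (Finset.mem_insert_self q X) (Finset.disjoint_left.1 hvb.2 hb.2.2)

lemma exists_lift (hP : P.Finite) (hY : ∀ r ∈ NF P, ¬ Violated Y Y r)
    (hwit : q ∈ Y → ∃ rs ∈ p3 (NF P) q ∪ p4 (NF P) q, Violated (Y \ {q}) (Y \ {q}) (strip q rs))
    (hXY : X ⊆ Y \ {q}) (hX : ¬ ∃ s ∈ fSPpre P q, Violated X (Y \ {q}) s) :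
    ∃ X', X' \ {q} = X ∧ X' ⊆ Y ∧ ∀ r ∈ NF P, ¬ Violated X' Y r := by
  have hXq : X \ {q} = X := Finset.sdiff_eq_self_of_disjoint
    (Finset.disjoint_singleton_right.2 fun h => by simpa using hXY h)
  have hXY' : X ⊆ Y := hXY.trans Finset.sdiff_subset
  by_cases hq : q ∈ Y
  · obtain ⟨rs, hrs, hvs⟩ := hwit hq
    rcases lift_of_mem hP hY hq hrs hvs hXY hX with h | h
    · exact ⟨X, hXq, hXY', h⟩
    · exact ⟨insert q X, by rw [Finset.insert_sdiff_of_mem _ (Finset.mem_singleton_self q), hXq],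
        Finset.insert_subset hq hXY', h⟩
  · exact ⟨X, hXq, hXY', lift_of_not_mem hP hY hq hXY hX⟩

theorem sdiff_mem_AS_fSP_union {R : Set (Rule α)} (hP : P.Finite)
    (hqR : q ∉ sigmaSet R) (hY : Y ∈ AS (P ∪ R)) : Y \ {q} ∈ AS (fSP P q ∪ R) := by
  obtain ⟨⟨-, hYsig, hYht⟩, hYmin⟩ := hY
  obtain ⟨hYP, hYR⟩ := htSat_union.1 hYht
  have hYY := (Finset.sdiff_idem Y {q}).symm
  have hYNF := (htSat_iff.1 ((htSat_NF_iff subset_rfl).2 hYP)).1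
  have hsmaller : ∀ X ⊂ Y, (∀ r ∈ NF P, ¬ Violated X Y r) → ¬ htSat R X Y := fun X hX hXP hXR =>
    hYmin X hX ⟨hX.subset, hYsig,
      htSat_union.2 ⟨(htSat_NF_iff hX.subset).1 (htSat_iff.2 ⟨hYNF, hXP⟩), hXR⟩⟩
  have hwit : q ∈ Y → ∃ rs ∈ p3 (NF P) q ∪ p4 (NF P) q,
      Violated (Y \ {q}) (Y \ {q}) (strip q rs) := fun hq => by
    have hss : Y \ {q} ⊂ Y := Finset.sdiff_ssubset (by simpa using hq) (by simp)
    obtain ⟨rs, hrs, hv⟩ : ∃ rs ∈ NF P, Violated (Y \ {q}) Y rs := by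
      by_contra! h
      exact hsmaller _ hss h ((htSat_congr hqR hYY.symm rfl).2 hYR)
    exact ⟨rs, exists_witness hYNF hrs hv⟩
  have hnoX : ∀ X ⊂ Y \ {q}, ¬ htSat (fSP P q ∪ R) X (Y \ {q}) := by
    intro X hX h
    obtain ⟨hF, hR⟩ := htSat_union.1 h
    obtain ⟨X', hX'q, hX'Y, hX'⟩ :=
      exists_lift hP hYNF hwit hX.subset fun ⟨s, hs, hv⟩ =>
        (htSat_iff.1 ((htSat_NF_iff hX.subset).1 hF)).2 s hs hv
    refine hsmaller X' (hX'Y.ssubset_of_ne ?_) hX' ((htSat_congr hqR ?_ hYY.symm).1 hR)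
    · rintro rfl
      exact hX.ne hX'q.symm
    · rw [← hX'q, Finset.sdiff_idem]
  have hmodel : htSat (fSP P q ∪ R) (Y \ {q}) (Y \ {q}) := by
    have hF := not_violated_fSPpre hYNF hwit
    exact htSat_union.2 ⟨(htSat_NF_iff subset_rfl).2 (htSat_iff.2 ⟨hF, hF⟩),
      (htSat_congr hqR hYY.symm hYY.symm).2 hYR⟩
  exact ⟨⟨subset_rfl, coe_subset_sigmaSet hmodel hnoX, hmodel⟩, fun X hX h => hnoX X hX h.2.2⟩

end Forgetting

theorem statement_5_general (Sg : Finset α) (P : Set (Rule α)) (hP : P.Finite) (q : α) :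
    ∀ R : Set (Rule α), R.Finite → sigmaSet R ⊆ (↑Sg : Set α) \ {q} →
      (fun Y => Y \ ({q} : Finset α)) '' AS (P ∪ R) ⊆ AS (fSP P q ∪ R) := by
  rintro R - hRS _ ⟨Y, hY, rfl⟩
  exact sdiff_mem_AS_fSP_union hP (fun h => (hRS h).2 rfl) hY

/-- every answer set of `P ∪ R` (with `q` removed) is an answer set
    of `f_SP(P,q) ∪ R`. -/
theorem statement_5 (Sg : Finset α) (P : Set (Rule α)) (hP : P.Finite)
    (hPS : sigmaSet P ⊆ (↑Sg : Set α)) (q : α) (hq : q ∈ Sg) :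
    ∀ R : Set (Rule α), R.Finite → sigmaSet R ⊆ (↑Sg : Set α) \ {q} →
      (fun Y => Y \ ({q} : Finset α)) '' AS (P ∪ R) ⊆ AS (fSP P q ∪ R) :=
  statement_5_general Sg P hP q

end ASPForget
end

section
/- Let P be an extended logic program in normal form over Σ and q ∈ Σ. If P is q-forgettable, then f_SP(P,q) = NF(Q), where Q consists of the rules of R (the rules of NF(P) not mentioning q) together with exactly the rules generated by derivation rules (1a), (1b) and (4); i.e. the derivation rules (2a), (3a), (2b), (3b), (5), (6), (7) contribute nothing to the result. -/
/- Core development: extended logic programs, HT-semantics, normal form,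
   the syntactic forgetting operator f_SP, the semantic operator f_Sem,
   criterion Ω, q-forgettability, and distances between programs. -/

namespace ASPForget

variable {α : Type*} [DecidableEq α]

lemma mem_bp_iff {r : Rule α} {a : α} : a ∈ r.bp ↔ Lit.pos a ∈ r.body := by
  constructor
  · intro h
    simp only [Rule.bp, Finset.mem_image, Finset.mem_filter] at h
    obtain ⟨l, ⟨hl, hp⟩, ha⟩ := h
    cases l <;> simp_all [Lit.isPos, Lit.atom]
  · intro h
    simp only [Rule.bp, Finset.mem_image, Finset.mem_filter]
    exact ⟨Lit.pos a, ⟨h, rfl⟩, rfl⟩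

lemma mem_bn_iff {r : Rule α} {a : α} : a ∈ r.bn ↔ Lit.neg a ∈ r.body := by
  constructor
  · intro h
    simp only [Rule.bn, Finset.mem_image, Finset.mem_filter] at h
    obtain ⟨l, ⟨hl, hp⟩, ha⟩ := h
    cases l <;> simp_all [Lit.isNeg, Lit.atom]
  · intro h
    simp only [Rule.bn, Finset.mem_image, Finset.mem_filter]
    exact ⟨Lit.neg a, ⟨h, rfl⟩, rfl⟩

lemma mem_bnn_iff {r : Rule α} {a : α} : a ∈ r.bnn ↔ Lit.nneg a ∈ r.body := by
  constructor
  · intro h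
    simp only [Rule.bnn, Finset.mem_image, Finset.mem_filter] at h
    obtain ⟨l, ⟨hl, hp⟩, ha⟩ := h
    cases l <;> simp_all [Lit.isNneg, Lit.atom]
  · intro h
    simp only [Rule.bnn, Finset.mem_image, Finset.mem_filter]
    exact ⟨Lit.nneg a, ⟨h, rfl⟩, rfl⟩

lemma NF_eq_self {P : Set (Rule α)} (hNF : InNormalForm P) : NF P = P := by
  obtain ⟨h1, h2, h3⟩ := hNF
  have hnt : ∀ r ∈ P, ¬ Tautological r := by
    intro r hr ht
    rcases ht with ⟨a, ha⟩ | ⟨a, ha⟩ | ⟨a, ha⟩ <;> rw [Finset.mem_inter] at ha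
    · exact (h2 r hr a ha.1).1 (mem_bp_iff.mp ha.2)
    · exact (h1 r hr a).1 ⟨mem_bp_iff.mp ha.1, mem_bn_iff.mp ha.2⟩
    · exact (h1 r hr a).2.2 ⟨mem_bn_iff.mp ha.1, mem_bnn_iff.mp ha.2⟩
  have hnf : ∀ r ∈ P, nfRule r = r := by
    intro r hr
    have hh : r.head \ r.bn = r.head := by
      rw [Finset.sdiff_eq_self_iff_disjoint, Finset.disjoint_left]
      intro a ha hb
      exact (h2 r hr a ha).2 (mem_bn_iff.mp hb)
    have hb : r.body.filter (fun l => ¬(l.isNneg = true ∧ l.atom ∈ r.bp)) = r.body := by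
      rw [Finset.filter_eq_self]
      intro l hl
      simp only [decide_eq_true_eq, not_and]
      intro hnn hbp
      cases l with
      | pos a => simp [Lit.isNneg] at hnn
      | neg a => simp [Lit.isNneg] at hnn
      | nneg a => exact (h1 r hr a).2.1 ⟨mem_bp_iff.mp hbp, hl⟩
    show (⟨r.head \ r.bn, _⟩ : Rule α) = r
    rw [hh]
    cases r
    simp only [Rule.mk.injEq, true_and]
    exact hb
  have hst : {r ∈ P | ¬ Tautological r} = P := by
    ext r
    exact ⟨fun h => h.1, fun h => ⟨h, hnt r h⟩⟩
  have himg : nfRule '' {r ∈ P | ¬ Tautological r} = P := by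
    rw [hst]
    rw [Set.image_congr hnf, Set.image_id']
  unfold NF
  rw [himg]
  ext r
  exact ⟨fun h => h.1, fun h => ⟨h, h3 r h⟩⟩

/-- for q-forgettable programs, `f_SP(P,q)` is constructed using only
    the derivation rules (1a), (1b) and (4) (besides the rules not mentioning `q`). -/
theorem statement_8 (Sg : Finset α) (P : Set (Rule α)) (hP : P.Finite)
    (hPS : sigmaSet P ⊆ (↑Sg : Set α)) (hNF : InNormalForm P) (q : α) (hq : q ∈ Sg)
    (hqf : QForgettable q P) :
    fSP P q = NF (pR (NF P) q ∪ gen1a P q ∪ gen1b P q ∪ gen4 P q) := by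
  have hNFP : NF P = P := NF_eq_self hNF
  have hkill : (p3 P q = ∅) ∨
      (p0 P q = ∅ ∧ p2 P q = ∅ ∧ p1 P q = ∅ ∧ p4 P q = ∅) := by
    obtain ⟨h1, h2, h3⟩ := hNF
    rcases hqf with h | h | h
    · right
      refine ⟨?_, ?_, ?_, ?_⟩
      · ext r
        simp only [p0, Set.mem_setOf_eq, Set.mem_empty_iff_false, iff_false]
        rintro ⟨hr, hb⟩
        have hq' : q ∈ sigmaR r := by
          simp only [sigmaR, Finset.mem_union, Finset.mem_image]
          exact Or.inr ⟨Lit.pos q, hb, rfl⟩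
        exact (h1 r hr q).2.1 ⟨hb, (h r hr hq').2⟩
      · ext r
        simp only [p2, Set.mem_setOf_eq, Set.mem_empty_iff_false, iff_false]
        rintro ⟨hr, hb, hnh⟩
        have hq' : q ∈ sigmaR r := by
          simp only [sigmaR, Finset.mem_union, Finset.mem_image]
          exact Or.inr ⟨Lit.nneg q, hb, rfl⟩
        exact hnh (h r hr hq').1
      · ext r
        simp only [p1, Set.mem_setOf_eq, Set.mem_empty_iff_false, iff_false]
        rintro ⟨hr, hb⟩
        have hq' : q ∈ sigmaR r := by
          simp only [sigmaR, Finset.mem_union, Finset.mem_image]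
          exact Or.inr ⟨Lit.neg q, hb, rfl⟩
        exact (h2 r hr q (h r hr hq').1).2 hb
      · ext r
        simp only [p4, Set.mem_setOf_eq, Set.mem_empty_iff_false, iff_false]
        rintro ⟨hr, hnb, hh⟩
        have hq' : q ∈ sigmaR r := by
          simp only [sigmaR, Finset.mem_union]
          exact Or.inl hh
        exact hnb (h r hr hq').2
    · left
      ext r
      simp only [p3, Set.mem_setOf_eq, Set.mem_empty_iff_false, iff_false]
      rintro ⟨hr, hb, hh⟩
      refine h3 r hr ⟨⟨{q}, ∅⟩, h, Or.inl ⟨?_, ?_⟩⟩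
      · exact Finset.singleton_subset_iff.mpr hh
      · exact Finset.empty_ssubset.mpr ⟨_, hb⟩
    · left
      ext r
      simp only [p3, Set.mem_setOf_eq, Set.mem_empty_iff_false, iff_false]
      rintro ⟨hr, hb, hh⟩
      exact h r hr ⟨hh, hb⟩
  have g2a : gen2a P q = ∅ := by
    ext s
    simp only [gen2a, Set.mem_setOf_eq, Set.mem_empty_iff_false, iff_false]
    rintro ⟨r0, hr0, r3, hr3, r', hr', -⟩
    rw [hNFP] at hr0 hr3
    rcases hkill with h | ⟨h0, _, _, _⟩
    · rw [h] at hr3; exact hr3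
    · rw [h0] at hr0; exact hr0
  have g3a : gen3a P q = ∅ := by
    ext s
    simp only [gen3a, Set.mem_setOf_eq, Set.mem_empty_iff_false, iff_false]
    rintro ⟨r0, hr0, r3, hr3, hA, hhA, D, hD, -⟩
    rw [hNFP] at hr0 hr3
    rcases hkill with h | ⟨h0, _, _, _⟩
    · rw [h] at hr3; exact hr3
    · rw [h0] at hr0; exact hr0
  have g2b : gen2b P q = ∅ := by
    ext s
    simp only [gen2b, Set.mem_setOf_eq, Set.mem_empty_iff_false, iff_false]
    rintro ⟨r2, hr2, r3, hr3, r', hr', -⟩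
    rw [hNFP] at hr2 hr3
    rcases hkill with h | ⟨_, h2', _, _⟩
    · rw [h] at hr3; exact hr3
    · rw [h2'] at hr2; exact hr2
  have g3b : gen3b P q = ∅ := by
    ext s
    simp only [gen3b, Set.mem_setOf_eq, Set.mem_empty_iff_false, iff_false]
    rintro ⟨r2, hr2, r3, hr3, hA, hhA, D, hD, -⟩
    rw [hNFP] at hr2 hr3
    rcases hkill with h | ⟨_, h2', _, _⟩
    · rw [h] at hr3; exact hr3
    · rw [h2'] at hr2; exact hr2
  have g5 : gen5 P q = ∅ := by
    ext s
    simp only [gen5, Set.mem_setOf_eq, Set.mem_empty_iff_false, iff_false]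
    rintro ⟨r', hr', r3, hr3, r, hr, D, hD, -, -⟩
    rw [hNFP] at hr' hr3
    rcases hkill with h | ⟨_, _, h1', h4'⟩
    · rw [h] at hr3; exact hr3
    · rcases hr' with h' | h'
      · rw [h1'] at h'; exact h'
      · rw [h4'] at h'; exact h'
  have g6 : gen6 P q = ∅ := by
    ext s
    simp only [gen6, Set.mem_setOf_eq, Set.mem_empty_iff_false, iff_false]
    rintro ⟨r', hr', r3, hr3, hA, hhA, D, hD, -⟩
    rw [hNFP] at hr' hr3
    rcases hkill with h | ⟨_, _, h1', h4'⟩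
    · rw [h] at hr3; exact hr3
    · rcases hr' with h' | h'
      · rw [h1'] at h'; exact h'
      · rw [h4'] at h'; exact h'
  have g7 : gen7 P q = ∅ := by
    ext s
    simp only [gen7, Set.mem_setOf_eq, Set.mem_empty_iff_false, iff_false]
    rintro ⟨r0, hr0, r3, hr3, r3', hr3', -, -⟩
    rw [hNFP] at hr0 hr3
    rcases hkill with h | ⟨h0, _, _, _⟩
    · rw [h] at hr3; exact hr3
    · rw [h0] at hr0; exact hr0
  unfold fSP fSPpre
  rw [g2a, g3a, g2b, g3b, g5, g6, g7]
  simp only [Set.union_empty]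

end ASPForget
end

section
/- Let P be an extended logic program over Σ and q ∈ Σ, and let Σ' = Σ(P)∖{q}. Then dist(P, f_Sem(P,q)) ≥ (|f_Sem(P,q)| − |P|) · |Σ'|, where |f_Sem(P,q)| and |P| denote numbers of rules. -/
/- Core development: extended logic programs, HT-semantics, normal form,
   the syntactic forgetting operator f_SP, the semantic operator f_Sem,
   criterion Ω, q-forgettability, and distances between programs. -/

namespace ASPForget

variable {α : Type*} [DecidableEq α]

/-! Every rule of `f_Sem(P,q)` has a body literal on each atom of `Σ'`, so its size is at least
`|Σ'|`. A partial injection from `P` to `f_Sem(P,q)` hits at most `|P|` of its rules, and each of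
the at least `|f_Sem(P,q)| - |P|` rules it misses contributes its full size to the distance. -/

lemma ncard_mul_le_finsum_mem {β : Type*} {S : Set β} {g : β → ℕ} {k : ℕ}
    (h : ∀ x ∈ S, k ≤ g x) : S.ncard * k ≤ ∑ᶠ x ∈ S, g x := by
  rcases S.finite_or_infinite with hS | hS
  · rw [finsum_mem_eq_finite_toFinset_sum _ hS, Set.ncard_eq_toFinset_card _ hS, ← smul_eq_mul]
    exact Finset.card_nsmul_le_sum _ _ _ fun x hx => h x (hS.mem_toFinset.1 hx)
  · simp [hS.ncard]

lemma le_distM {P₁ P₂ dom : Set (Rule α)} {f : Rule α → Rule α} {k : ℕ}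
    (hP₁ : P₁.Finite) (hdom : dom ⊆ P₁) (hk : ∀ r ∈ P₂, k ≤ ruleSize r) :
    (P₂.ncard - P₁.ncard) * k ≤ distM P₁ P₂ dom f := by
  have hdomfin : dom.Finite := hP₁.subset hdom
  have hunmatched : P₂.ncard - P₁.ncard ≤ (P₂ \ f '' dom).ncard :=
    calc P₂.ncard - P₁.ncard
        ≤ P₂.ncard - (f '' dom).ncard := Nat.sub_le_sub_left
          ((Set.ncard_image_le hdomfin).trans (Set.ncard_le_ncard hdom hP₁)) _
      _ ≤ (P₂ \ f '' dom).ncard := Set.le_ncard_sdiff _ _ (hdomfin.image f)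
  calc (P₂.ncard - P₁.ncard) * k
      ≤ (P₂ \ f '' dom).ncard * k := Nat.mul_le_mul_right _ hunmatched
    _ ≤ ∑ᶠ r ∈ P₂ \ f '' dom, ruleSize r :=
        ncard_mul_le_finsum_mem fun r hr => hk r hr.1
    _ ≤ distM P₁ P₂ dom f := Nat.le_add_left _ _

lemma le_progDist {P₁ P₂ : Set (Rule α)} {k : ℕ} (hP₁ : P₁.Finite)
    (hk : ∀ r ∈ P₂, k ≤ ruleSize r) :
    (P₂.ncard - P₁.ncard) * k ≤ progDist P₁ P₂ := by
  refine le_csInf ⟨distM P₁ P₂ ∅ id, ∅, id, by simp [Set.InjOn]⟩ ?_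
  rintro n ⟨dom, f, hdom, -, -, rfl⟩
  exact le_distM hP₁ hdom hk

lemma card_le_ruleSize_of_subset {r : Rule α} {S : Finset α}
    (hS : S ⊆ r.body.image Lit.atom) : S.card ≤ ruleSize r :=
  (Finset.card_le_card hS).trans (Finset.card_image_le.trans (Nat.le_add_left _ _))

lemma subset_image_atom_ruleXY (Sg' X Y : Finset α) :
    Sg' ⊆ (ruleXY Sg' X Y).body.image Lit.atom := by
  intro a ha
  simp only [ruleXY, Finset.mem_image, Finset.mem_union, Finset.mem_sdiff]
  by_cases haX : a ∈ X
  · exact ⟨.pos a, Or.inl (Or.inl ⟨a, haX, rfl⟩), rfl⟩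
  by_cases haY : a ∈ Y
  · exact ⟨.nneg a, Or.inr ⟨a, ⟨haY, haX⟩, rfl⟩, rfl⟩
  · exact ⟨.neg a, Or.inl (Or.inr ⟨a, ⟨ha, haY⟩, rfl⟩), rfl⟩

lemma subset_image_atom_ruleYY (Sg' Y : Finset α) :
    Sg' ⊆ (ruleYY Sg' Y).body.image Lit.atom := by
  intro a ha
  simp only [ruleYY, Finset.mem_image, Finset.mem_union, Finset.mem_sdiff]
  by_cases haY : a ∈ Y
  · exact ⟨.pos a, Or.inl ⟨a, haY, rfl⟩, rfl⟩
  · exact ⟨.neg a, Or.inr ⟨a, ⟨ha, haY⟩, rfl⟩, rfl⟩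

lemma card_le_ruleSize_of_mem_fSem {P : Set (Rule α)} {q : α} {Sg' : Finset α} {s : Rule α}
    (hs : s ∈ fSem P q Sg') : Sg'.card ≤ ruleSize s := by
  rcases hs with ⟨X, Y, -, -, -, -, rfl⟩ | ⟨Y, -, -, rfl⟩
  · exact card_le_ruleSize_of_subset (subset_image_atom_ruleXY Sg' X Y)
  · exact card_le_ruleSize_of_subset (subset_image_atom_ruleYY Sg' Y)

theorem statement_11_general (P : Set (Rule α)) (hP : P.Finite) (q : α) (Sg' : Finset α) :
    ((fSem P q Sg').ncard - P.ncard) * Sg'.card ≤ progDist P (fSem P q Sg') :=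
  le_progDist hP fun _ hs => card_le_ruleSize_of_mem_fSem hs

/-- lower bound on the distance between `P` and `f_Sem(P,q)`:
    `dist(P, f_Sem(P,q)) ≥ (|f_Sem(P,q)| − |P|) · |Σ'|`. -/
theorem statement_11 (P : Set (Rule α)) (hP : P.Finite) (q : α) (Sg' : Finset α)
    (hS : (↑Sg' : Set α) = sigmaSet P \ {q}) :
    ((fSem P q Sg').ncard - P.ncard) * Sg'.card ≤ progDist P (fSem P q Sg') :=
  statement_11_general P hP q Sg'

end ASPForget
end
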